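/- arXiv:2003.05632 — 5 statements merged into one kernel-verified Lean document; each statement's English description precedes it below -/
import Mathlib

section
/- For every z, w ∈ ℂ there exists C ≥ 0 such that for all u, v ∈ ℓ²(ℕ, ℂᵖ) the doubly indexed family (n, m) ↦ (u_n)^* 𝒦_{n,m}(z, w) v_m is absolutely summable and |∑_{n,m≥0} (u_n)^* 𝒦_{n,m}(z, w) v_m| ≤ C·‖u‖_{ℓ²}·‖v‖_{ℓ²}. In other words, the semi-infinite block matrix (𝒦_{n,m}(z,w))_{n,m≥0} defines a bounded operator from ℓ²(ℕ, ℂᵖ) into itself. -/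
/-!
Cauchy's estimates on the torus `|ζ₁ - z| = |ζ₂ - w̄| = 2`, applied first in the second variable
and then in the first (the inner derivative is still holomorphic in the first variable by joint
analyticity), give `‖𝒦_{n,m}(z,w)‖ ≤ M 2⁻ⁿ 2⁻ᵐ`. Hence the block matrix is dominated entrywise
by the rank-one matrix `(2⁻ⁿ 2⁻ᵐ)`, and Cauchy–Schwarz bounds `∑ 2⁻ⁿ ‖uₙ‖` by a multiple of `‖u‖`.
-/

open scoped ComplexConjugate InnerProductSpace

attribute [local instance] Matrix.normedAddCommGroup Matrix.normedSpace

/-- `𝒦_{n,m}(z,w) := (1/(n!·m!)) ∂₁ⁿ∂₂ᵐ G(z, conj w)`: the normalized iterated partial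
derivative of `G`, `m` times in the second variable at `conj w`, then `n` times in the first
variable at `z`.  This encodes the kernel `K(z,w) = G(z, conj w)`, entire in `z` and `w̄`. -/
noncomputable def kernelCoeff {p : ℕ} (G : ℂ × ℂ → Matrix (Fin p) (Fin p) ℂ)
    (n m : ℕ) (z w : ℂ) : Matrix (Fin p) (Fin p) ℂ :=
  ((n.factorial * m.factorial : ℂ)⁻¹) •
    iteratedDeriv n (fun z' => iteratedDeriv m (fun ζ => G (z', ζ)) (conj w)) z

open Metric

section Slice

variable {𝕜 : Type*} [NontriviallyNormedField 𝕜] {F : Type*} [NormedAddCommGroup F]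
  [NormedSpace 𝕜 F] {E : Type*} [NormedAddCommGroup E] [NormedSpace 𝕜 E]

theorem deriv_comp_prodMk_eq_fderiv_apply {H : F × 𝕜 → E} {a : F} {t : 𝕜}
    (hH : DifferentiableAt 𝕜 H (a, t)) :
    deriv (fun s => H (a, s)) t = fderiv 𝕜 H (a, t) (0, 1) :=
  (hH.hasFDerivAt.comp_hasDerivAt t ((hasDerivAt_const t a).prodMk (hasDerivAt_id t))).deriv

theorem AnalyticOnNhd.iteratedDeriv_snd [CompleteSpace E] {H : F × 𝕜 → E}
    (hH : AnalyticOnNhd 𝕜 H Set.univ) (m : ℕ) :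
    AnalyticOnNhd 𝕜 (fun x : F × 𝕜 => iteratedDeriv m (fun t => H (x.1, t)) x.2) Set.univ := by
  induction m generalizing H with
  | zero => simpa using hH
  | succ m ih =>
    have hH' : AnalyticOnNhd 𝕜 (fun x => fderiv 𝕜 H x (0, 1)) Set.univ := fun x hx =>
      ((ContinuousLinearMap.apply 𝕜 E ((0, 1) : F × 𝕜)).analyticAt _).comp (hH.fderiv x hx)
    convert ih hH' using 2 with x
    rw [iteratedDeriv_succ']
    congr 1
    funext t
    exact deriv_comp_prodMk_eq_fderiv_apply (hH _ trivial).differentiableAt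

end Slice

theorem norm_kernelCoeff_le {p : ℕ} {G : ℂ × ℂ → Matrix (Fin p) (Fin p) ℂ}
    (hG : AnalyticOnNhd ℂ G Set.univ) (z w : ℂ) {r M : ℝ} (hr : 0 < r)
    (hM : ∀ x ∈ sphere z r ×ˢ sphere (conj w) r, ‖G x‖ ≤ M) (n m : ℕ) :
    ‖kernelCoeff G n m z w‖ ≤ M * (r ^ n)⁻¹ * (r ^ m)⁻¹ := by
  set f : ℂ → Matrix (Fin p) (Fin p) ℂ := fun a => iteratedDeriv m (fun ζ => G (a, ζ)) (conj w)
  have hf : Differentiable ℂ f :=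
    (differentiableOn_univ.1 (hG.iteratedDeriv_snd m).differentiableOn).comp
      (differentiable_id.prodMk (differentiable_const _))
  have hf_sphere : ∀ a ∈ sphere z r, ‖f a‖ ≤ m.factorial * M / r ^ m := fun a ha =>
    Complex.norm_iteratedDeriv_le_of_forall_mem_sphere_norm_le m hr
      ((differentiableOn_univ.1 hG.differentiableOn).comp
        ((differentiable_const a).prodMk differentiable_id)).diffContOnCl
      (fun ζ hζ => hM (a, ζ) ⟨ha, hζ⟩)
  have hfz := Complex.norm_iteratedDeriv_le_of_forall_mem_sphere_norm_le n hr hf.diffContOnCl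
    hf_sphere
  rw [kernelCoeff, norm_smul, norm_inv, norm_mul, Complex.norm_natCast, Complex.norm_natCast]
  calc ((n.factorial : ℝ) * m.factorial)⁻¹ * ‖iteratedDeriv n f z‖
      ≤ ((n.factorial : ℝ) * m.factorial)⁻¹ *
          (n.factorial * (m.factorial * M / r ^ m) / r ^ n) := by gcongr
    _ = M * (r ^ n)⁻¹ * (r ^ m)⁻¹ := by field_simp

theorem Matrix.exists_norm_inner_toEuclideanLin_le {𝕜 : Type*} [RCLike 𝕜] {n : Type*}
    [Fintype n] [DecidableEq n] :
    ∃ K, 0 ≤ K ∧ ∀ (A : Matrix n n 𝕜) (x y : EuclideanSpace 𝕜 n),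
      ‖⟪x, Matrix.toEuclideanLin A y⟫_𝕜‖ ≤ K * ‖A‖ * ‖x‖ * ‖y‖ := by
  let L : Matrix n n 𝕜 →L[𝕜] EuclideanSpace 𝕜 n →L[𝕜] EuclideanSpace 𝕜 n :=
    LinearMap.toContinuousLinearMap
      (Matrix.toEuclideanCLM (n := n) (𝕜 := 𝕜)).toAlgEquiv.toLinearEquiv.toLinearMap
  obtain ⟨K, hK, hL⟩ := L.bound
  refine ⟨K, hK.le, fun A x y => ?_⟩
  calc ‖⟪x, Matrix.toEuclideanLin A y⟫_𝕜‖ ≤ ‖x‖ * ‖L A y‖ := norm_inner_le_norm _ _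
    _ ≤ ‖x‖ * (‖L A‖ * ‖y‖) := by gcongr; exact (L A).le_opNorm y
    _ ≤ ‖x‖ * (K * ‖A‖ * ‖y‖) := by gcongr; exact hL A
    _ = K * ‖A‖ * ‖x‖ * ‖y‖ := by ring

theorem lp.summable_mul_norm_and_tsum_le {ι : Type*} {E : ι → Type*}
    [∀ i, NormedAddCommGroup (E i)] (u : lp E 2) {a : ι → ℝ} (ha : ∀ i, 0 ≤ a i)
    (ha_sq : Summable fun i => a i ^ 2) :
    (Summable fun i => a i * ‖u i‖) ∧ ∑' i, a i * ‖u i‖ ≤ √(∑' i, a i ^ 2) * ‖u‖ := by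
  have hu := (lp.memℓp u).summable (by norm_num : 0 < (2 : ENNReal).toReal)
  have := Real.summable_and_inner_le_Lp_mul_Lq_tsum_of_nonneg Real.HolderConjugate.two_two ha
    (fun i => norm_nonneg (u i)) (by simpa using ha_sq) (by simpa using hu)
  simpa [lp.norm_eq_tsum_rpow (by norm_num : 0 < (2 : ENNReal).toReal) u, Real.sqrt_eq_rpow]
    using this

theorem summable_norm_and_norm_tsum_le_of_le_mul {ι κ E : Type*} [NormedAddCommGroup E]
    {f : ι × κ → E} {a : ι → ℝ} {b : κ → ℝ} {c : ℝ} (ha : Summable a) (hb : Summable b)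
    (ha₀ : ∀ i, 0 ≤ a i) (hb₀ : ∀ j, 0 ≤ b j) (hf : ∀ x, ‖f x‖ ≤ c * (a x.1 * b x.2)) :
    (Summable fun x => ‖f x‖) ∧ ‖∑' x, f x‖ ≤ c * (∑' i, a i) * ∑' j, b j := by
  have hab : Summable fun x : ι × κ => a x.1 * b x.2 := ha.mul_of_nonneg hb ha₀ hb₀
  have hf_sum : Summable fun x => ‖f x‖ :=
    (hab.mul_left c).of_nonneg_of_le (fun _ => norm_nonneg _) hf
  refine ⟨hf_sum, ?_⟩
  calc ‖∑' x, f x‖ ≤ ∑' x, ‖f x‖ := norm_tsum_le_tsum_norm hf_sum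
    _ ≤ ∑' x : ι × κ, c * (a x.1 * b x.2) := hf_sum.tsum_le_tsum hf (hab.mul_left c)
    _ = c * (∑' i, a i) * ∑' j, b j := by rw [tsum_mul_left, ← ha.tsum_mul_tsum hb hab, mul_assoc]

theorem exists_norm_inner_kernelCoeff_le {p : ℕ} {G : ℂ × ℂ → Matrix (Fin p) (Fin p) ℂ}
    (hG : AnalyticOnNhd ℂ G Set.univ) (z w : ℂ) :
    ∃ C, 0 ≤ C ∧ ∀ (n m : ℕ) (x y : EuclideanSpace ℂ (Fin p)),
      ‖⟪x, Matrix.toEuclideanLin (kernelCoeff G n m z w) y⟫_ℂ‖ ≤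
        C * ((2 : ℝ)⁻¹ ^ n * ‖x‖) * ((2 : ℝ)⁻¹ ^ m * ‖y‖) := by
  obtain ⟨M, hM⟩ := ((isCompact_sphere z 2).prod
    (isCompact_sphere (conj w) 2)).exists_bound_of_continuousOn
    (hG.continuousOn.mono (Set.subset_univ _))
  have hM₀ : 0 ≤ M := (norm_nonneg _).trans (hM (z + 2, conj w + 2) (by simp))
  obtain ⟨K, hK₀, hK⟩ := Matrix.exists_norm_inner_toEuclideanLin_le (𝕜 := ℂ) (n := Fin p)
  refine ⟨K * M, by positivity, fun n m x y => ?_⟩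
  grw [hK, norm_kernelCoeff_le hG z w two_pos hM]
  exact le_of_eq (by rw [inv_pow, inv_pow]; ring)

theorem kernelCoeff_block_bounded_general
    {p : ℕ} (G : ℂ × ℂ → Matrix (Fin p) (Fin p) ℂ)
    (hG : AnalyticOnNhd ℂ G Set.univ) (z w : ℂ) :
    ∃ C : ℝ, 0 ≤ C ∧
      ∀ u v : lp (fun _ : ℕ => EuclideanSpace ℂ (Fin p)) 2,
        Summable (fun nm : ℕ × ℕ =>
          ‖⟪(u nm.1 : EuclideanSpace ℂ (Fin p)),
              Matrix.toEuclideanLin (kernelCoeff G nm.1 nm.2 z w) (v nm.2)⟫_ℂ‖) ∧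
        ‖∑' nm : ℕ × ℕ,
            ⟪(u nm.1 : EuclideanSpace ℂ (Fin p)),
              Matrix.toEuclideanLin (kernelCoeff G nm.1 nm.2 z w) (v nm.2)⟫_ℂ‖
          ≤ C * ‖u‖ * ‖v‖ := by
  obtain ⟨C, hC₀, hC⟩ := exists_norm_inner_kernelCoeff_le hG z w
  set g : ℕ → ℝ := fun n => (2 : ℝ)⁻¹ ^ n
  have hg₀ : ∀ n, 0 ≤ g n := fun n => by positivity
  have hg_sq : Summable fun n => g n ^ 2 :=
    (summable_geometric_of_lt_one (by positivity) (by norm_num)).congr fun n =>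
      pow_right_comm ((2 : ℝ)⁻¹) 2 n
  set S := √(∑' n, g n ^ 2)
  refine ⟨C * S ^ 2, by positivity, fun u v => ?_⟩
  obtain ⟨hu, hu_le⟩ := lp.summable_mul_norm_and_tsum_le u hg₀ hg_sq
  obtain ⟨hv, hv_le⟩ := lp.summable_mul_norm_and_tsum_le v hg₀ hg_sq
  obtain ⟨hsum, hle⟩ := summable_norm_and_norm_tsum_le_of_le_mul hu hv
    (fun n => mul_nonneg (hg₀ n) (norm_nonneg _)) (fun n => mul_nonneg (hg₀ n) (norm_nonneg _))
    fun nm => (hC nm.1 nm.2 (u nm.1) (v nm.2)).trans_eq (mul_assoc _ _ _)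
  refine ⟨hsum, hle.trans ?_⟩
  calc C * (∑' n, g n * ‖u n‖) * (∑' m, g m * ‖v m‖)
      ≤ C * (S * ‖u‖) * (S * ‖v‖) := by gcongr
    _ = C * S ^ 2 * ‖u‖ * ‖v‖ := by ring

/-- For an entire matrix-valued kernel, the semi-infinite block matrix
`(𝒦_{n,m}(z,w))` defines a bounded operator on `ℓ²(ℕ, ℂᵖ)`. -/
theorem kernelCoeff_block_bounded
    {p : ℕ} (hp : 1 ≤ p) (G : ℂ × ℂ → Matrix (Fin p) (Fin p) ℂ)
    (hG : AnalyticOnNhd ℂ G Set.univ) (z w : ℂ) :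
    ∃ C : ℝ, 0 ≤ C ∧
      ∀ u v : lp (fun _ : ℕ => EuclideanSpace ℂ (Fin p)) 2,
        Summable (fun nm : ℕ × ℕ =>
          ‖⟪(u nm.1 : EuclideanSpace ℂ (Fin p)),
              Matrix.toEuclideanLin (kernelCoeff G nm.1 nm.2 z w) (v nm.2)⟫_ℂ‖) ∧
        ‖∑' nm : ℕ × ℕ,
            ⟪(u nm.1 : EuclideanSpace ℂ (Fin p)),
              Matrix.toEuclideanLin (kernelCoeff G nm.1 nm.2 z w) (v nm.2)⟫_ℂ‖
          ≤ C * ‖u‖ * ‖v‖ :=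
  kernelCoeff_block_bounded_general G hG z w
end

section
/- For all z, w ∈ ℂ and all u, v ∈ ℓ²(ℕ, ℂᵖ): the series g := ∑_{m≥0} D_{m,w}(u_m) and h := ∑_{n≥0} D_{n,z}(v_n) converge in H, and ∑_{n,m≥0} (v_n)^* 𝒦_{n,m}(z, w) u_m = ⟨g, h⟩_H (both sides converging absolutely). Consequently the bounded operator on ℓ²(ℕ, ℂᵖ) determined by the block matrix (𝒦_{n,m}(z,w)) factors as 𝒦(z,w) = J_z J_w^*. -/
/-! Cauchy estimates on circles of radius `2`, applied in each variable (the `m`-th derivative of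
`G` in its second variable is again entire), give `‖𝒦_{n,m}(z,w)‖ ≤ C · 2^{-(n+m)}`. By the compatibility identity `‖D_{m,c} ξ‖² = ξ* 𝒦_{m,m}(c,c) ξ`,
so `‖D_{m,c} ξ‖ = O(2^{-m} ‖ξ‖)` and both series converge absolutely in `H`. The double series is
then the inner product of two absolutely convergent series, whose terms may be summed in any order.
-/

open scoped ComplexConjugate InnerProductSpace

attribute [local instance] Matrix.normedAddCommGroup Matrix.normedSpace

section InnerSeries

variable {𝕜 E ι κ : Type*} [RCLike 𝕜] [NormedAddCommGroup E] [InnerProductSpace 𝕜 E]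
  {x : ι → E} {y : κ → E}

theorem summable_norm_inner_of_summable_norm (hx : Summable (‖x ·‖)) (hy : Summable (‖y ·‖)) :
    Summable fun ij : ι × κ => ‖⟪x ij.1, y ij.2⟫_𝕜‖ :=
  .of_nonneg_of_le (fun _ => norm_nonneg _) (fun ij => norm_inner_le_norm (x ij.1) (y ij.2))
    (hx.mul_of_nonneg hy (fun _ => norm_nonneg _) fun _ => norm_nonneg _)

theorem HasSum.inner {a b : E} (hx : HasSum x a) (hy : HasSum y b)
    (hxy : Summable fun ij : ι × κ => ⟪x ij.1, y ij.2⟫_𝕜) :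
    HasSum (fun ij : ι × κ => ⟪x ij.1, y ij.2⟫_𝕜) ⟪a, b⟫_𝕜 := by
  have hfiber (i : ι) : HasSum (fun j => ⟪x i, y j⟫_𝕜) ⟪x i, b⟫_𝕜 := (innerSL 𝕜 (x i)).hasSum hy
  have hleft : HasSum (fun i => ⟪x i, b⟫_𝕜) ⟪a, b⟫_𝕜 :=
    hx.map (AddMonoidHom.mk' (fun v => ⟪v, b⟫_𝕜) fun _ _ => inner_add_left _ _ _)
      (continuous_id.inner continuous_const)
  exact hleft.unique (hxy.hasSum.prod_fiberwise hfiber) ▸ hxy.hasSum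

end InnerSeries

theorem exists_norm_toEuclideanLin_le (𝕜 n : Type*) [RCLike 𝕜] [Fintype n] [DecidableEq n] :
    ∃ c : ℝ, 0 ≤ c ∧ ∀ (A : Matrix n n 𝕜) (ξ : EuclideanSpace 𝕜 n),
      ‖Matrix.toEuclideanLin A ξ‖ ≤ c * ‖A‖ * ‖ξ‖ := by
  let T : Matrix n n 𝕜 →ₗ[𝕜] EuclideanSpace 𝕜 n →L[𝕜] EuclideanSpace 𝕜 n :=
    (Matrix.toEuclideanCLM (n := n) (𝕜 := 𝕜)).toAlgEquiv.toLinearMap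
  obtain ⟨c, hc0, hc⟩ := SemilinearMapClass.bound_of_continuous T T.continuous_of_finiteDimensional
  refine ⟨c, hc0.le, fun A ξ => ?_⟩
  calc ‖Matrix.toEuclideanLin A ξ‖ = ‖T A ξ‖ := rfl
    _ ≤ ‖T A‖ * ‖ξ‖ := (T A).le_opNorm ξ
    _ ≤ c * ‖A‖ * ‖ξ‖ := by gcongr; exact hc A

theorem AnalyticOnNhd.exists_iteratedDeriv_snd_eq {𝕜 X E : Type*} [NontriviallyNormedField 𝕜]
    [NormedAddCommGroup X] [NormedSpace 𝕜 X] [NormedAddCommGroup E] [NormedSpace 𝕜 E]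
    {F : X × 𝕜 → E} (hF : AnalyticOnNhd 𝕜 F Set.univ) (m : ℕ) :
    ∃ Φ : X × 𝕜 → E, AnalyticOnNhd 𝕜 Φ Set.univ ∧
      ∀ a b, iteratedDeriv m (fun t => F (a, t)) b = Φ (a, b) := by
  induction m generalizing F with
  | zero => exact ⟨F, hF, fun _ _ => rfl⟩
  | succ m ih =>
    have hderiv (a : X) : deriv (fun t => F (a, t)) = fun t => fderiv 𝕜 F (a, t) (0, 1) := by
      funext t
      exact ((hF _ trivial).differentiableAt.hasFDerivAt.comp_hasDerivAt t
        ((hasDerivAt_const t a).prodMk (hasDerivAt_id t))).deriv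
    obtain ⟨Φ, hΦ, hΦeq⟩ := ih (F := fun x => fderiv 𝕜 F x (0, 1))
      ((ContinuousLinearMap.apply 𝕜 E ((0 : X), (1 : 𝕜))).comp_analyticOnNhd
        (hF.fderiv_of_isOpen isOpen_univ))
    exact ⟨Φ, hΦ, fun a b => by rw [iteratedDeriv_succ', hderiv, hΦeq]⟩

open Metric in
theorem norm_kernelCoeff_le_s5 {p : ℕ} {G : ℂ × ℂ → Matrix (Fin p) (Fin p) ℂ}
    (hG : AnalyticOnNhd ℂ G Set.univ) (z w : ℂ) {R : ℝ} (hR : 0 < R) :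
    ∃ C : ℝ, ∀ n m : ℕ, ‖kernelCoeff G n m z w‖ ≤ C / R ^ (n + m) := by
  obtain ⟨C, hC⟩ := ((isCompact_closedBall z R).prod (isCompact_closedBall (conj w) R))
    |>.exists_bound_of_continuousOn (hG.continuousOn.mono (Set.subset_univ _))
  refine ⟨C, fun n m => ?_⟩
  have hGd : Differentiable ℂ G := fun x => (hG x trivial).differentiableAt
  obtain ⟨Φ, hΦ, hΦeq⟩ := hG.exists_iteratedDeriv_snd_eq m
  have hΦd : Differentiable ℂ fun z' => Φ (z', conj w) := fun z' =>
    (hΦ _ trivial).differentiableAt.comp z' (differentiableAt_id.prodMk (differentiableAt_const _))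
  have hinner (z' : ℂ) (hz' : z' ∈ sphere z R) : ‖Φ (z', conj w)‖ ≤ m.factorial * C / R ^ m := by
    rw [← hΦeq]
    exact Complex.norm_iteratedDeriv_le_of_forall_mem_sphere_norm_le m hR
      (hGd.comp ((differentiable_const z').prodMk differentiable_id)).diffContOnCl
      fun ζ hζ => hC _ ⟨sphere_subset_closedBall hz', sphere_subset_closedBall hζ⟩
  have houter := Complex.norm_iteratedDeriv_le_of_forall_mem_sphere_norm_le n hR
    hΦd.diffContOnCl hinner
  simp only [kernelCoeff, hΦeq, norm_smul, norm_inv, norm_mul, Complex.norm_natCast]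
  calc ((n.factorial : ℝ) * m.factorial)⁻¹ * ‖iteratedDeriv n (fun z' => Φ (z', conj w)) z‖
      ≤ ((n.factorial : ℝ) * m.factorial)⁻¹ *
          (n.factorial * (m.factorial * C / R ^ m) / R ^ n) := by
        gcongr
    _ = C / R ^ (n + m) := by
        field_simp
        ring

theorem summable_norm_of_inner_self_eq_kernelCoeff {p : ℕ} {G : ℂ × ℂ → Matrix (Fin p) (Fin p) ℂ}
    (hG : AnalyticOnNhd ℂ G Set.univ) {H : Type*} [NormedAddCommGroup H] [InnerProductSpace ℂ H]
    (c : ℂ) {x : ℕ → H} {ξ : ℕ → EuclideanSpace ℂ (Fin p)} {B : ℝ} (hξ : ∀ m, ‖ξ m‖ ≤ B)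
    (hx : ∀ m, ⟪x m, x m⟫_ℂ = ⟪ξ m, Matrix.toEuclideanLin (kernelCoeff G m m c c) (ξ m)⟫_ℂ) :
    Summable fun m => ‖x m‖ := by
  obtain ⟨a, ha0, ha⟩ := exists_norm_toEuclideanLin_le ℂ (Fin p)
  obtain ⟨C, hC⟩ := norm_kernelCoeff_le_s5 hG c c two_pos
  have hsq (m : ℕ) : ‖x m‖ ^ 2 ≤ a * C * B ^ 2 * (((1 : ℝ) / 2) ^ m) ^ 2 := by
    calc ‖x m‖ ^ 2 = ‖⟪x m, x m⟫_ℂ‖ := by rw [inner_self_eq_norm_sq_to_K]; simp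
      _ ≤ ‖ξ m‖ * (a * ‖kernelCoeff G m m c c‖ * ‖ξ m‖) := by
        rw [hx]
        exact (norm_inner_le_norm _ _).trans (by gcongr; exact ha _ _)
      _ ≤ B * (a * (C / 2 ^ (m + m)) * B) := by
        have hK := hC m m
        have hξm := hξ m
        have hB : 0 ≤ B := (norm_nonneg _).trans hξm
        have haK : 0 ≤ a * (C / 2 ^ (m + m)) := mul_nonneg ha0 ((norm_nonneg _).trans hK)
        gcongr
      _ = a * C * B ^ 2 * (((1 : ℝ) / 2) ^ m) ^ 2 := by
        rw [pow_add, one_div, inv_pow]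
        field_simp
  refine (summable_geometric_two.mul_left (Real.sqrt (a * C * B ^ 2))).of_nonneg_of_le
    (fun _ => norm_nonneg _) fun m => ?_
  rw [← Real.sqrt_sq (by positivity : (0 : ℝ) ≤ ((1 : ℝ) / 2) ^ m),
    ← Real.sqrt_mul' _ (by positivity)]
  exact Real.le_sqrt_of_sq_le (hsq m)

theorem kernelCoeff_factorization_general
    {p : ℕ} (G : ℂ × ℂ → Matrix (Fin p) (Fin p) ℂ)
    (hG : AnalyticOnNhd ℂ G Set.univ)
    {H : Type*} [NormedAddCommGroup H] [InnerProductSpace ℂ H] [CompleteSpace H]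
    (D : ℕ → ℂ → EuclideanSpace ℂ (Fin p) →ₗ[ℂ] H)
    (hcompat : ∀ (n m : ℕ) (z w : ℂ) (ξ η : EuclideanSpace ℂ (Fin p)),
      ⟪D n z η, D m w ξ⟫_ℂ = ⟪η, Matrix.toEuclideanLin (kernelCoeff G n m z w) ξ⟫_ℂ)
    (z w : ℂ) (u v : lp (fun _ : ℕ => EuclideanSpace ℂ (Fin p)) 2) :
    ∃ g h : H,
      HasSum (fun m : ℕ => D m w (u m)) g ∧
      HasSum (fun n : ℕ => D n z (v n)) h ∧
      Summable (fun nm : ℕ × ℕ =>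
        ‖⟪(v nm.1 : EuclideanSpace ℂ (Fin p)),
            Matrix.toEuclideanLin (kernelCoeff G nm.1 nm.2 z w) (u nm.2)⟫_ℂ‖) ∧
      ∑' nm : ℕ × ℕ,
          ⟪(v nm.1 : EuclideanSpace ℂ (Fin p)),
            Matrix.toEuclideanLin (kernelCoeff G nm.1 nm.2 z w) (u nm.2)⟫_ℂ
        = ⟪h, g⟫_ℂ := by
  have hg : Summable fun m => ‖D m w (u m)‖ :=
    summable_norm_of_inner_self_eq_kernelCoeff hG w (lp.norm_apply_le_norm two_ne_zero u)
      fun m => hcompat m m w w _ _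
  have hh : Summable fun n => ‖D n z (v n)‖ :=
    summable_norm_of_inner_self_eq_kernelCoeff hG z (lp.norm_apply_le_norm two_ne_zero v)
      fun n => hcompat n n z z _ _
  have habs := summable_norm_inner_of_summable_norm (𝕜 := ℂ) hh hg
  have hsum := hh.of_norm.hasSum.inner hg.of_norm.hasSum habs.of_norm
  simp only [hcompat] at habs hsum
  exact ⟨_, _, hg.of_norm.hasSum, hh.of_norm.hasSum, habs, hsum.tsum_eq⟩

/-- In the reproducing-kernel setup (`H` a complex Hilbert space realized by
`ι` as a space of entire `ℂᵖ`-valued functions with derivative-evaluation elements `D_{n,w}η`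
satisfying `⟨f, D_{n,w}η⟩_H = η* (ι f)⁽ⁿ⁾(w)/n!` and the compatibility
`⟨D_{m,w}ξ, D_{n,z}η⟩_H = η* 𝒦_{n,m}(z,w) ξ`; the paper's inner product `⟨·,·⟩_H`, linear in the
first argument, is `⟪b, a⟫` in Mathlib's convention): for all `z, w` and `u, v ∈ ℓ²(ℕ, ℂᵖ)`
the series `g := ∑ₘ D_{m,w}(uₘ)` and `h := ∑ₙ D_{n,z}(vₙ)` converge in `H`, the family
`(n,m) ↦ (vₙ)* 𝒦_{n,m}(z,w) uₘ` is absolutely summable, and its sum is `⟨g, h⟩_H`;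
i.e. `𝒦(z,w)` factors as `J_z J_w^*`. -/
theorem kernelCoeff_factorization
    {p : ℕ} (hp : 1 ≤ p) (G : ℂ × ℂ → Matrix (Fin p) (Fin p) ℂ)
    (hG : AnalyticOnNhd ℂ G Set.univ)
    {H : Type*} [NormedAddCommGroup H] [InnerProductSpace ℂ H] [CompleteSpace H]
    (ι : H →ₗ[ℂ] ℂ → EuclideanSpace ℂ (Fin p)) (hι : Function.Injective ι)
    (hent : ∀ f : H, Differentiable ℂ (ι f))
    (D : ℕ → ℂ → EuclideanSpace ℂ (Fin p) →ₗ[ℂ] H)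
    (hD : ∀ (f : H) (n : ℕ) (w : ℂ) (η : EuclideanSpace ℂ (Fin p)),
      ⟪D n w η, f⟫_ℂ = ⟪η, (n.factorial : ℂ)⁻¹ • iteratedDeriv n (ι f) w⟫_ℂ)
    (hcompat : ∀ (n m : ℕ) (z w : ℂ) (ξ η : EuclideanSpace ℂ (Fin p)),
      ⟪D n z η, D m w ξ⟫_ℂ = ⟪η, Matrix.toEuclideanLin (kernelCoeff G n m z w) ξ⟫_ℂ)
    (z w : ℂ) (u v : lp (fun _ : ℕ => EuclideanSpace ℂ (Fin p)) 2) :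
    ∃ g h : H,
      HasSum (fun m : ℕ => D m w (u m)) g ∧
      HasSum (fun n : ℕ => D n z (v n)) h ∧
      Summable (fun nm : ℕ × ℕ =>
        ‖⟪(v nm.1 : EuclideanSpace ℂ (Fin p)),
            Matrix.toEuclideanLin (kernelCoeff G nm.1 nm.2 z w) (u nm.2)⟫_ℂ‖) ∧
      ∑' nm : ℕ × ℕ,
          ⟪(v nm.1 : EuclideanSpace ℂ (Fin p)),
            Matrix.toEuclideanLin (kernelCoeff G nm.1 nm.2 z w) (u nm.2)⟫_ℂ
        = ⟪h, g⟫_ℂ :=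
  kernelCoeff_factorization_general G hG D hcompat z w u v
end

section
/- For every z ∈ ℂ the jet map J_z : f ↦ ((ι f)⁽ⁿ⁾(z)/n!)_{n∈ℕ} maps H into ℓ²(ℕ, ℂᵖ) and is a bounded linear operator: there exists C ≥ 0 such that ∑_{n≥0} ‖(ι f)⁽ⁿ⁾(z)/n!‖² ≤ C²‖f‖²_H for every f ∈ H. -/
open scoped InnerProductSpace

open Nat ENNReal NNReal

/-!
The `n`-th jet coordinate `f ↦ (ι f)⁽ⁿ⁾(z)/n!` is the adjoint of `D_{n,z}`, hence bounded. For each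
`f` the jet is the coefficient sequence of the Taylor series of the entire function `ι f`, which
converges absolutely at `z + 1`, so it lies in `ℓ¹ ⊆ ℓ²`. The closed graph theorem then makes the
jet map `H → ℓ²` bounded, since `ℓ²`-convergence implies convergence of each coordinate.
-/

theorem HasFPowerSeriesOnBall.coeff_eq_inv_factorial_smul_iteratedDeriv
    {𝕜 F : Type*} [NontriviallyNormedField 𝕜] [CharZero 𝕜] [NormedAddCommGroup F]
    [NormedSpace 𝕜 F] [CompleteSpace F] {f : 𝕜 → F} {p : FormalMultilinearSeries 𝕜 𝕜 F}
    {x : 𝕜} {r : ℝ≥0∞} (h : HasFPowerSeriesOnBall f p x r) (n : ℕ) :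
    p.coeff n = (n ! : 𝕜)⁻¹ • iteratedDeriv n f x := by
  have hfac : (n ! : 𝕜) ≠ 0 := mod_cast n.factorial_ne_zero
  rw [iteratedDeriv_eq_iteratedFDeriv, ← h.factorial_smul, ← Nat.cast_smul_eq_nsmul 𝕜,
    inv_smul_smul₀ hfac, FormalMultilinearSeries.apply_eq_prod_smul_coeff]
  simp

theorem Differentiable.summable_norm_inv_factorial_smul_iteratedDeriv
    {E : Type*} [NormedAddCommGroup E] [NormedSpace ℂ E] [CompleteSpace E] {f : ℂ → E}
    (hf : Differentiable ℂ f) (z : ℂ) :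
    Summable fun n => ‖(n ! : ℂ)⁻¹ • iteratedDeriv n f z‖ := by
  have hp := hf.hasFPowerSeriesOnBall z (R := 1) one_pos
  have hr : (1 : ℝ≥0) < (cauchyPowerSeries f z (1 : ℝ≥0)).radius :=
    lt_of_lt_of_le coe_lt_top hp.r_le
  convert (cauchyPowerSeries f z (1 : ℝ≥0)).summable_norm_mul_pow hr using 2 with n
  rw [FormalMultilinearSeries.norm_apply_eq_norm_coef,
    hp.coeff_eq_inv_factorial_smul_iteratedDeriv, NNReal.coe_one, one_pow, mul_one]

theorem Differentiable.memℓp_inv_factorial_smul_iteratedDeriv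
    {E : Type*} [NormedAddCommGroup E] [NormedSpace ℂ E] [CompleteSpace E] {f : ℂ → E}
    (hf : Differentiable ℂ f) (z : ℂ) {q : ℝ≥0∞} (hq : 1 ≤ q) :
    Memℓp (fun n => (n ! : ℂ)⁻¹ • iteratedDeriv n f z) q :=
  (memℓp_gen (by simpa using hf.summable_norm_inv_factorial_smul_iteratedDeriv z)).of_exponent_ge hq

theorem ContinuousLinearMap.adjoint_apply_eq_of_inner {𝕜 E F : Type*} [RCLike 𝕜]
    [NormedAddCommGroup E] [InnerProductSpace 𝕜 E] [CompleteSpace E]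
    [NormedAddCommGroup F] [InnerProductSpace 𝕜 F] [CompleteSpace F]
    (A : F →L[𝕜] E) (g : E → F) (h : ∀ x η, ⟪A η, x⟫_𝕜 = ⟪η, g x⟫_𝕜) (x : E) :
    adjoint A x = g x :=
  ext_inner_left 𝕜 fun η => by rw [adjoint_inner_right, h]

section lpPi

variable {𝕜 E ι : Type*} {F : ι → Type*} [NontriviallyNormedField 𝕜]
  [NormedAddCommGroup E] [NormedSpace 𝕜 E] [CompleteSpace E]
  [∀ i, NormedAddCommGroup (F i)] [∀ i, NormedSpace 𝕜 (F i)] [∀ i, CompleteSpace (F i)]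
  {q : ℝ≥0∞} [Fact (1 ≤ q)]

noncomputable def ContinuousLinearMap.lpPi (T : ∀ i, E →L[𝕜] F i)
    (hT : ∀ x, Memℓp (fun i => T i x) q) : E →L[𝕜] lp F q :=
  ContinuousLinearMap.ofSeqClosedGraph
    (g := { toFun x := ⟨fun i => T i x, hT x⟩
            map_add' x y := lp.ext <| funext fun i => map_add (T i) x y
            map_smul' c x := lp.ext <| funext fun i => map_smul (T i) c x })
    fun _u x y hu hy => lp.ext <| funext fun i =>
      tendsto_nhds_unique (((lp.evalCLM 𝕜 F q i).continuous.tendsto y).comp hy)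
        (((T i).continuous.tendsto x).comp hu)

@[simp]
theorem ContinuousLinearMap.lpPi_apply (T : ∀ i, E →L[𝕜] F i)
    (hT : ∀ x, Memℓp (fun i => T i x) q) (x : E) (i : ι) :
    ContinuousLinearMap.lpPi T hT x i = T i x :=
  rfl

end lpPi

theorem lp.hasSum_norm_sq {ι : Type*} {F : ι → Type*} [∀ i, NormedAddCommGroup (F i)]
    (x : lp F 2) : HasSum (fun i => ‖x i‖ ^ 2) (‖x‖ ^ 2) := by
  have h := lp.hasSum_norm (p := 2) (by norm_num) x
  rw [toReal_ofNat] at h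
  exact_mod_cast h

theorem jet_map_bounded_general
    {p : ℕ}
    {H : Type*} [NormedAddCommGroup H] [InnerProductSpace ℂ H] [CompleteSpace H]
    (ι : H →ₗ[ℂ] ℂ → EuclideanSpace ℂ (Fin p))
    (hent : ∀ f : H, Differentiable ℂ (ι f))
    (D : ℕ → ℂ → EuclideanSpace ℂ (Fin p) →ₗ[ℂ] H)
    (hD : ∀ (f : H) (n : ℕ) (w : ℂ) (η : EuclideanSpace ℂ (Fin p)),
      ⟪D n w η, f⟫_ℂ = ⟪η, (n.factorial : ℂ)⁻¹ • iteratedDeriv n (ι f) w⟫_ℂ)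
    (z : ℂ) :
    ∃ C : ℝ, 0 ≤ C ∧ ∀ f : H,
      Summable (fun n : ℕ => ‖(n.factorial : ℂ)⁻¹ • iteratedDeriv n (ι f) z‖ ^ 2) ∧
      ∑' n : ℕ, ‖(n.factorial : ℂ)⁻¹ • iteratedDeriv n (ι f) z‖ ^ 2 ≤ C ^ 2 * ‖f‖ ^ 2 := by
  set T : ℕ → H →L[ℂ] EuclideanSpace ℂ (Fin p) :=
    fun n => ContinuousLinearMap.adjoint (LinearMap.toContinuousLinearMap (D n z))
  have hT (n : ℕ) (f : H) : T n f = (n ! : ℂ)⁻¹ • iteratedDeriv n (ι f) z :=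
    ContinuousLinearMap.adjoint_apply_eq_of_inner _
      (fun f => (n ! : ℂ)⁻¹ • iteratedDeriv n (ι f) z) (fun f η => hD f n z η) f
  let J := ContinuousLinearMap.lpPi (q := 2) T fun f => by
    simpa only [hT] using (hent f).memℓp_inv_factorial_smul_iteratedDeriv z one_le_two
  refine ⟨‖J‖, norm_nonneg _, fun f => ?_⟩
  have hJf : HasSum (fun n => ‖(n ! : ℂ)⁻¹ • iteratedDeriv n (ι f) z‖ ^ 2) (‖J f‖ ^ 2) := by
    simpa only [J, ContinuousLinearMap.lpPi_apply, hT] using lp.hasSum_norm_sq (J f)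
  refine ⟨hJf.summable, hJf.tsum_eq ▸ ?_⟩
  rw [← mul_pow]
  exact pow_le_pow_left₀ (norm_nonneg _) (J.le_opNorm f) 2

/-- In the reproducing-kernel setup (`H` a complex Hilbert space realized by
`ι` as a space of entire `ℂᵖ`-valued functions with derivative-evaluation elements `D_{n,w}η`
satisfying `⟨f, D_{n,w}η⟩_H = η* (ι f)⁽ⁿ⁾(w)/n!`; the paper's inner product, linear in the
first argument, is `⟪b, a⟫` in Mathlib's convention): for every `z ∈ ℂ` the jet map
`J_z : f ↦ ((ι f)⁽ⁿ⁾(z)/n!)ₙ` maps `H` into `ℓ²(ℕ, ℂᵖ)` and is bounded: there is `C ≥ 0` with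
`∑ₙ ‖(ι f)⁽ⁿ⁾(z)/n!‖² ≤ C²‖f‖²` for all `f ∈ H`. -/
theorem jet_map_bounded
    {p : ℕ} (hp : 1 ≤ p)
    {H : Type*} [NormedAddCommGroup H] [InnerProductSpace ℂ H] [CompleteSpace H]
    (ι : H →ₗ[ℂ] ℂ → EuclideanSpace ℂ (Fin p)) (hι : Function.Injective ι)
    (hent : ∀ f : H, Differentiable ℂ (ι f))
    (D : ℕ → ℂ → EuclideanSpace ℂ (Fin p) →ₗ[ℂ] H)
    (hD : ∀ (f : H) (n : ℕ) (w : ℂ) (η : EuclideanSpace ℂ (Fin p)),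
      ⟪D n w η, f⟫_ℂ = ⟪η, (n.factorial : ℂ)⁻¹ • iteratedDeriv n (ι f) w⟫_ℂ)
    (z : ℂ) :
    ∃ C : ℝ, 0 ≤ C ∧ ∀ f : H,
      Summable (fun n : ℕ => ‖(n.factorial : ℂ)⁻¹ • iteratedDeriv n (ι f) z‖ ^ 2) ∧
      ∑' n : ℕ, ‖(n.factorial : ℂ)⁻¹ • iteratedDeriv n (ι f) z‖ ^ 2 ≤ C ^ 2 * ‖f‖ ^ 2 :=
  jet_map_bounded_general ι hent D hD z
end

section
/- For every w ∈ ℂ and η = (η_m) ∈ ℓ²(ℕ, ℂᵖ), let g := ∑_{m≥0} D_{m,w}(η_m) ∈ H. Then for every n ∈ ℕ and z ∈ ℂ, the n-th normalized Taylor coefficient of ι(g) at z is given by (ι g)⁽ⁿ⁾(z)/n! = ∑_{m≥0} 𝒦_{n,m}(z, w) η_m (the series on the right converging in ℂᵖ). That is, the jet of g at z equals the n-indexed column of the block matrix 𝒦(z,w) applied to η. -/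
open scoped ComplexConjugate InnerProductSpace

attribute [local instance] Matrix.normedAddCommGroup Matrix.normedSpace

/-- In the reproducing-kernel setup (the paper's inner product `⟨·,·⟩_H`,
linear in the first argument, is `⟪b, a⟫` in Mathlib's convention): if
`g = ∑ₘ D_{m,w}(ηₘ)` for some `η ∈ ℓ²(ℕ, ℂᵖ)`, then for every `n ∈ ℕ` and `z ∈ ℂ` the series
`∑ₘ 𝒦_{n,m}(z,w) ηₘ` converges in `ℂᵖ` to the `n`-th normalized Taylor coefficient
`(ι g)⁽ⁿ⁾(z)/n!` of `g` at `z`. -/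
theorem jet_of_D_series
    {p : ℕ} (hp : 1 ≤ p) (G : ℂ × ℂ → Matrix (Fin p) (Fin p) ℂ)
    (hG : AnalyticOnNhd ℂ G Set.univ)
    {H : Type*} [NormedAddCommGroup H] [InnerProductSpace ℂ H] [CompleteSpace H]
    (ι : H →ₗ[ℂ] ℂ → EuclideanSpace ℂ (Fin p)) (hι : Function.Injective ι)
    (hent : ∀ f : H, Differentiable ℂ (ι f))
    (D : ℕ → ℂ → EuclideanSpace ℂ (Fin p) →ₗ[ℂ] H)
    (hD : ∀ (f : H) (n : ℕ) (w : ℂ) (η : EuclideanSpace ℂ (Fin p)),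
      ⟪D n w η, f⟫_ℂ = ⟪η, (n.factorial : ℂ)⁻¹ • iteratedDeriv n (ι f) w⟫_ℂ)
    (hcompat : ∀ (n m : ℕ) (z w : ℂ) (ξ η : EuclideanSpace ℂ (Fin p)),
      ⟪D n z η, D m w ξ⟫_ℂ = ⟪η, Matrix.toEuclideanLin (kernelCoeff G n m z w) ξ⟫_ℂ)
    (w : ℂ) (η : lp (fun _ : ℕ => EuclideanSpace ℂ (Fin p)) 2)
    (g : H) (hg : HasSum (fun m : ℕ => D m w (η m)) g) :
    ∀ (n : ℕ) (z : ℂ),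
      HasSum (fun m : ℕ => Matrix.toEuclideanLin (kernelCoeff G n m z w) (η m))
        ((n.factorial : ℂ)⁻¹ • iteratedDeriv n (ι g) z) := by
  intro n z
  have key : ∀ ξ : EuclideanSpace ℂ (Fin p),
      HasSum (fun m => ⟪ξ, Matrix.toEuclideanLin (kernelCoeff G n m z w) (η m)⟫_ℂ)
        ⟪ξ, (n.factorial : ℂ)⁻¹ • iteratedDeriv n (ι g) z⟫_ℂ := by
    intro ξ
    have h1 : HasSum (fun m => ⟪D n z ξ, D m w (η m)⟫_ℂ) ⟪D n z ξ, g⟫_ℂ :=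
      hg.mapL (innerSL ℂ (D n z ξ))
    rw [hD] at h1
    simpa only [hcompat] using h1
  have comp : ∀ i : Fin p,
      HasSum (fun m => (Matrix.toEuclideanLin (kernelCoeff G n m z w) (η m)) i)
        (((n.factorial : ℂ)⁻¹ • iteratedDeriv n (ι g) z) i) := by
    intro i
    have h := key (EuclideanSpace.single i 1)
    simpa [EuclideanSpace.inner_single_left] using h
  have e := PiLp.continuousLinearEquiv 2 ℂ (fun _ : Fin p => ℂ)
  have hpi : HasSum
      (fun m => (PiLp.continuousLinearEquiv 2 ℂ (fun _ : Fin p => ℂ))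
        (Matrix.toEuclideanLin (kernelCoeff G n m z w) (η m)))
      ((PiLp.continuousLinearEquiv 2 ℂ (fun _ : Fin p => ℂ))
        ((n.factorial : ℂ)⁻¹ • iteratedDeriv n (ι g) z)) :=
    Pi.hasSum.2 comp
  exact (PiLp.continuousLinearEquiv 2 ℂ (fun _ : Fin p => ℂ)).hasSum.1 hpi
end

section
/- Let n ≥ 1 and let a, b, A, B ∈ Matrix (Fin n) (Fin n) ℂ and z, w ∈ ℂ. With the pairing ⟨a, M⟩ := Tr(aᴴ M), the series ∑_{k=0}^∞ (1/k!) · Tr(aᴴ (z·I + A)ᵏ) · conj(Tr(bᴴ (w·I + B)ᵏ)) converges absolutely and equals Tr( (aᴴ ⊗ b) · exp( (z·I + A) ⊗ (conj(w)·I + Bᴴ) ) ), where ⊗ denotes the Kronecker product of matrices, exp the matrix exponential, I the identity matrix, and ᴴ the conjugate transpose. -/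
/-!
With `M = z • 1 + A` and `N = w • 1 + B`, one has `conj (Tr (bᴴ * N ^ k)) = Tr (b * Nᴴ ^ k)`, and the
trace is multiplicative on Kronecker products, so the `k`-th term of the series is the linear
functional `Y ↦ Tr ((aᴴ ⊗ₖ b) * Y)` applied to `(M ⊗ₖ Nᴴ) ^ k / k!`. Every linear functional on a
finite-dimensional space is continuous, so it commutes with the absolutely convergent exponential
series of `M ⊗ₖ Nᴴ`.
-/

open scoped ComplexConjugate Matrix Kronecker

open NormedSpace Nat

theorem ContinuousLinearMap.summable_norm_map_expSeries {𝕂 𝔸 E : Type*} [RCLike 𝕂]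
    [NormedRing 𝔸] [NormedAlgebra 𝕂 𝔸] [NormedAddCommGroup E] [NormedSpace 𝕂 E]
    (f : 𝔸 →L[𝕂] E) (x : 𝔸) : Summable fun k => ‖f ((k ! : 𝕂)⁻¹ • x ^ k)‖ :=
  .of_nonneg_of_le (fun _ => norm_nonneg _) (fun _ => f.le_opNorm _)
    ((norm_expSeries_summable' x).mul_left ‖f‖)

namespace Matrix

variable {m : Type*} [Fintype m]

theorem trace_mul_mul_trace_mul {R : Type*} [CommSemiring R] (P M Q N : Matrix m m R) :
    trace (P * M) * trace (Q * N) = trace ((P ⊗ₖ Q) * (M ⊗ₖ N)) := by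
  rw [← trace_kronecker, mul_kronecker_mul]

theorem star_trace_conjTranspose_mul {R : Type*} [CommRing R] [StarRing R] (b N : Matrix m m R) :
    star (trace (bᴴ * N)) = trace (b * Nᴴ) := by
  rw [← trace_conjTranspose, conjTranspose_mul, conjTranspose_conjTranspose, trace_mul_comm]

variable [DecidableEq m]

theorem kronecker_pow {R : Type*} [CommSemiring R] (M N : Matrix m m R) (k : ℕ) :
    (M ⊗ₖ N) ^ k = (M ^ k) ⊗ₖ (N ^ k) := by
  induction k with
  | zero => simp
  | succ k ih => rw [pow_succ, pow_succ, pow_succ, ih, mul_kronecker_mul]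

variable {𝕂 : Type*} [RCLike 𝕂]

theorem summable_norm_linearMap_expSeries (ℓ : Matrix m m 𝕂 →ₗ[𝕂] 𝕂) (X : Matrix m m 𝕂) :
    Summable fun k => ‖ℓ ((k ! : 𝕂)⁻¹ • X ^ k)‖ := by
  let : NormedRing (Matrix m m 𝕂) := Matrix.linftyOpNormedRing
  let : NormedAlgebra 𝕂 (Matrix m m 𝕂) := Matrix.linftyOpNormedAlgebra
  exact (LinearMap.toContinuousLinearMap ℓ).summable_norm_map_expSeries X

theorem hasSum_linearMap_expSeries (ℓ : Matrix m m 𝕂 →ₗ[𝕂] 𝕂) (X : Matrix m m 𝕂) :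
    HasSum (fun k => ℓ ((k ! : 𝕂)⁻¹ • X ^ k)) (ℓ (exp X)) := by
  let : NormedRing (Matrix m m 𝕂) := Matrix.linftyOpNormedRing
  let : NormedAlgebra 𝕂 (Matrix m m 𝕂) := Matrix.linftyOpNormedAlgebra
  -- completeness for the uniform structure of this norm, not the product one found by default
  have : @CompleteSpace (Matrix m m 𝕂) PseudoMetricSpace.toUniformSpace :=
    FiniteDimensional.complete 𝕂 _
  exact (LinearMap.toContinuousLinearMap ℓ).hasSum (exp_series_hasSum_exp' X)

end Matrix

open Matrix in
theorem fock_kernel_matrix_algebra_general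
    {n : ℕ} (a b A B : Matrix (Fin n) (Fin n) ℂ) (z w : ℂ) :
    Summable (fun k : ℕ =>
      ‖((k.factorial : ℂ))⁻¹ *
          Matrix.trace (aᴴ * (z • (1 : Matrix (Fin n) (Fin n) ℂ) + A) ^ k) *
          conj (Matrix.trace (bᴴ * (w • (1 : Matrix (Fin n) (Fin n) ℂ) + B) ^ k))‖) ∧
    ∑' k : ℕ,
        ((k.factorial : ℂ))⁻¹ *
          Matrix.trace (aᴴ * (z • (1 : Matrix (Fin n) (Fin n) ℂ) + A) ^ k) *
          conj (Matrix.trace (bᴴ * (w • (1 : Matrix (Fin n) (Fin n) ℂ) + B) ^ k))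
      = Matrix.trace ((aᴴ ⊗ₖ b) *
          NormedSpace.exp
            ((z • (1 : Matrix (Fin n) (Fin n) ℂ) + A) ⊗ₖ
              (conj w • (1 : Matrix (Fin n) (Fin n) ℂ) + Bᴴ))) := by
  set M := z • (1 : Matrix (Fin n) (Fin n) ℂ) + A
  set N := w • (1 : Matrix (Fin n) (Fin n) ℂ) + B
  have hN : Nᴴ = conj w • (1 : Matrix (Fin n) (Fin n) ℂ) + Bᴴ := by simp [N]
  let ℓ := (traceLinearMap (Fin n × Fin n) ℂ ℂ).comp (LinearMap.mulLeft ℂ (aᴴ ⊗ₖ b))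
  have hterm (k : ℕ) : (k ! : ℂ)⁻¹ * trace (aᴴ * M ^ k) * conj (trace (bᴴ * N ^ k)) =
      ℓ ((k ! : ℂ)⁻¹ • (M ⊗ₖ Nᴴ) ^ k) := by
    rw [mul_assoc, starRingEnd_apply, star_trace_conjTranspose_mul, conjTranspose_pow,
      trace_mul_mul_trace_mul, ← kronecker_pow, map_smul, smul_eq_mul]
    rfl
  simp_rw [hterm, ← hN]
  exact ⟨summable_norm_linearMap_expSeries ℓ _, (hasSum_linearMap_expSeries ℓ _).tsum_eq⟩

/-- For `n × n` complex matrices `a, b, A, B` and `z, w ∈ ℂ`, with pairing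
`⟨a, M⟩ = Tr(aᴴ M)`, the extended Fock-space kernel
`∑ₖ (1/k!) Tr(aᴴ (zI + A)ᵏ) · conj(Tr(bᴴ (wI + B)ᵏ))` converges absolutely and equals
`Tr((aᴴ ⊗ b) · exp((zI + A) ⊗ (w̄I + Bᴴ)))`, where `⊗` is the Kronecker product and `exp`
the matrix exponential. -/
theorem fock_kernel_matrix_algebra
    {n : ℕ} (hn : 1 ≤ n) (a b A B : Matrix (Fin n) (Fin n) ℂ) (z w : ℂ) :
    Summable (fun k : ℕ =>
      ‖((k.factorial : ℂ))⁻¹ *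
          Matrix.trace (aᴴ * (z • (1 : Matrix (Fin n) (Fin n) ℂ) + A) ^ k) *
          conj (Matrix.trace (bᴴ * (w • (1 : Matrix (Fin n) (Fin n) ℂ) + B) ^ k))‖) ∧
    ∑' k : ℕ,
        ((k.factorial : ℂ))⁻¹ *
          Matrix.trace (aᴴ * (z • (1 : Matrix (Fin n) (Fin n) ℂ) + A) ^ k) *
          conj (Matrix.trace (bᴴ * (w • (1 : Matrix (Fin n) (Fin n) ℂ) + B) ^ k))
      = Matrix.trace ((aᴴ ⊗ₖ b) *
          NormedSpace.exp
            ((z • (1 : Matrix (Fin n) (Fin n) ℂ) + A) ⊗ₖ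
              (conj w • (1 : Matrix (Fin n) (Fin n) ℂ) + Bᴴ))) :=
  fock_kernel_matrix_algebra_general a b A B z w
end
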